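/- With E_n as defined (|E_n| = 2^{3^{n-1}} · 3^{(3^n−1)/2}) and |Aut(T_n)| = 6^{(3^n−1)/2}, the limit as n → ∞ of log|E_n| / log|Aut(T_n)| equals 1 − (1/3)·(log 2 / log 6). -/

import Mathlib

open Equiv

/-- Leaves of the regular ternary rooted tree of height `n`. -/
def L : ℕ → Type
  | 0 => PUnit
  | n+1 => Fin 3 × L n

instance Ldec : ∀ n, DecidableEq (L n)
  | 0 => inferInstanceAs (DecidableEq PUnit)
  | n+1 => letI := Ldec n; inferInstanceAs (DecidableEq (Fin 3 × L n))

instance Lfin : ∀ n, Fintype (L n)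
  | 0 => inferInstanceAs (Fintype PUnit)
  | n+1 => letI := Lfin n; inferInstanceAs (Fintype (Fin 3 × L n))

/-- The wreath-product construction `G ≀ S_3` (as a type). -/
def W (G : Type) : Type := (Fin 3 → G) × Equiv.Perm (Fin 3)

instance Wgroup (G : Type) [Group G] : Group (W G) where
  mul x y := (fun i => x.1 (y.2 i) * y.1 i, x.2 * y.2)
  one := (fun _ => 1, 1)
  inv x := (fun i => (x.1 (x.2⁻¹ i))⁻¹, x.2⁻¹)
  mul_assoc x y z := Prod.ext (funext fun i => mul_assoc _ _ _) (mul_assoc _ _ _)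
  one_mul x := Prod.ext (funext fun i => one_mul _) (one_mul _)
  mul_one x := Prod.ext (funext fun i => mul_one _) (mul_one _)
  inv_mul_cancel x := Prod.ext (funext fun i => by
      show (x.1 (x.2⁻¹ (x.2 i)))⁻¹ * x.1 i = 1
      rw [show x.2⁻¹ (x.2 i) = i from x.2.symm_apply_apply i, inv_mul_cancel]) (inv_mul_cancel _)

/-- `A n` is the automorphism group of the ternary rooted tree of height `n`,
realized as the `n`-fold iterated wreath product of `S_3 = Aut(T_1)`. -/
def A : ℕ → Type
  | 0 => PUnit
  | n+1 => W (A n)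

instance Agroup : ∀ n, Group (A n)
  | 0 => inferInstanceAs (Group PUnit)
  | n+1 => @Wgroup (A n) (Agroup n)

/-- The faithful action of `A n` on the `3^n` leaves of the tree. -/
def toPerm : ∀ n, A n →* Equiv.Perm (L n)
  | 0 => 1
  | n+1 =>
    { toFun := fun x : W (A n) => Equiv.prodShear x.2 (fun i => toPerm n (x.1 i))
      map_one' := by
        apply Equiv.ext
        intro l
        show ((1 : Equiv.Perm (Fin 3)) l.1, toPerm n (1 : A n) l.2) = l
        rw [map_one]
        exact Prod.ext rfl rfl
      map_mul' := by
        intro x y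
        apply Equiv.ext
        intro l
        show ((x * y).2 l.1, toPerm n ((x * y).1 l.1) l.2)
          = (x.2 (y.2 l.1), toPerm n (x.1 (y.2 l.1)) ((toPerm n (y.1 l.1)) l.2))
        refine Prod.ext rfl ?_
        show toPerm n (x.1 (y.2 l.1) * y.1 l.1) l.2 = _
        rw [map_mul]
        rfl }

/-- Restriction `Aut(T_{n+1}) → Aut(T_n)` to the subtree spanned by the first `n` levels. -/
def res : ∀ n, A (n+1) →* A n
  | 0 => 1
  | n+1 =>
    { toFun := fun x : W (A (n+1)) => ((fun i => res n (x.1 i), x.2) : W (A n))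
      map_one' := Prod.ext (funext fun _ => map_one (res n)) rfl
      map_mul' := fun x y => Prod.ext (funext fun i => map_mul (res n) _ _) rfl }

/-- Restriction `Aut(T_{n+2}) → Aut(T_2)`. -/
def resTo2 : ∀ n, A (n+2) →* A 2
  | 0 => MonoidHom.id _
  | n+1 => (resTo2 n).comp (res (n+2))

/-- `sgn_2` : the sign of the permutation induced on the 9 leaves of `T_2`. -/
def sgn2 (n : ℕ) : A (n+2) →* ℤˣ :=
  Equiv.Perm.sign.comp ((toPerm 2).comp (resTo2 n))

/-- Given a subgroup `H ≤ Aut(T_n)`, the subgroup of `Aut(T_{n+1})` consisting of elements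
all of whose three level-1 components lie in `H` (the base of the wreath product `H ≀ S_3`). -/
def lift1 {n : ℕ} (Hn : Subgroup (A n)) : Subgroup (A (n+1)) where
  carrier := {x : W (A n) | ∀ i, x.1 i ∈ Hn}
  one_mem' := fun _ => Hn.one_mem
  mul_mem' := fun {x y} hx hy i => Hn.mul_mem (hx _) (hy _)
  inv_mem' := fun {x} hx i => Hn.inv_mem (hx _)

/-- The groups `E_n`: `E_1 = Aut(T_1)` and `E_n = (E_{n-1} ≀ Aut(T_1)) ∩ ker sgn_2`. -/
def E : ∀ n, Subgroup (A n)
  | 0 => ⊤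
  | 1 => ⊤
  | n+2 => lift1 (E (n+1)) ⊓ (sgn2 n).ker

/-- The projection onto the top (level-1) symmetric group component. -/
def sndHom (n : ℕ) : A (n+1) →* Equiv.Perm (Fin 3) where
  toFun := fun x : W (A n) => x.2
  map_one' := rfl
  map_mul' := fun _ _ => rfl

/-- The cyclic subgroup `C_3 ≤ S_3`. -/
def C3 : Subgroup (Equiv.Perm (Fin 3)) := Subgroup.zpowers (finRotate 3)

/-- The groups `H_n = [C_3]^n`, the iterated wreath product of cyclic groups of order 3. -/
def Hgp : ∀ n, Subgroup (A n)
  | 0 => ⊤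
  | n+1 => lift1 (Hgp n) ⊓ C3.comap (sndHom n)

/-- The elements `ν_n`: `ν_1 = (12)`, `ν_n = ((ν_{n-1},1,1),1)`. -/
def ν : ∀ n, A n
  | 0 => 1
  | 1 => ((fun _ => (1 : A 0), Equiv.swap 0 1) : W (A 0))
  | n+2 => ((fun i => if i = 0 then ν (n+1) else 1, 1) : W (A (n+1)))

/-- The elements `τ_n`: `τ_1 = (12)`, `τ_n = ((τ_{n-1},1,1),(12))`. -/
def τ : ∀ n, A n
  | 0 => 1
  | 1 => ((fun _ => (1 : A 0), Equiv.swap 0 1) : W (A 0))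
  | n+2 => ((fun i => if i = 0 then τ (n+1) else 1, Equiv.swap 0 1) : W (A (n+1)))

/-- Truncation of a leaf of `T_n` to the vertex at level `m` below it. -/
def take : ∀ (n m : ℕ), L n → L m
  | _, 0, _ => PUnit.unit
  | 0, m+1, _ => ((0, take 0 m PUnit.unit) : Fin 3 × L m)
  | n+1, m+1, l => ((l.1, take n m l.2) : Fin 3 × L m)

/-!
With `s n = 1 + 3 + ⋯ + 3 ^ (n - 1)` interior vertices in `T_n`, each carrying an `S_3` label,
`|Aut(T_n)| = 6 ^ s n`. The group `E (n + 2)` has index two in `E (n + 1) ≀ S_3`: rigidly swapping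
two subtrees at the root lies in the wreath product and is odd on the nine leaves of `T_2`.
Hence `|E (n + 1)| = 2 ^ 3 ^ n * 3 ^ s (n + 1)`, the ratio of logarithms is
`log 3 / log 6 + (3 ^ n / s (n + 1)) * (log 2 / log 6)`, and `3 ^ n / s (n + 1) → 2 / 3`.
-/

open Filter Topology Finset Real

theorem Subgroup.card_inf_ker_mul_two {G : Type*} [Group G] {H : Subgroup G} {φ : G →* ℤˣ}
    {g : G} (hg : g ∈ H) (hφg : φ g = -1) : Nat.card ↥(H ⊓ φ.ker) * 2 = Nat.card H := by
  have hmap : H.map φ = ⊤ := by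
    refine eq_top_iff.2 fun u _ => ?_
    rcases Int.units_eq_one_or u with rfl | rfl
    · exact one_mem _
    · exact ⟨g, hg, hφg⟩
  have := relIndex_mul_relIndex ⊥ (H ⊓ φ.ker) H bot_le inf_le_left
  rwa [relIndex_bot_left, relIndex_bot_left, inf_relIndex_left, relIndex_ker, hmap, card_top,
    Nat.card_eq_fintype_card (α := ℤˣ), Fintype.card_units_int] at this

theorem card_W (G : Type) : Nat.card (W G) = Nat.card G ^ 3 * 6 := by
  rw [W, Nat.card_prod, Nat.card_pi, Nat.card_eq_fintype_card (α := Perm (Fin 3)),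
    Fintype.card_perm, prod_const, card_univ, Fintype.card_fin]
  rfl

theorem card_A (n : ℕ) : Nat.card (A n) = 6 ^ ∑ i ∈ range n, 3 ^ i := by
  induction n with
  | zero => exact Nat.card_unique (α := PUnit)
  | succ n ih =>
    rw [A, card_W, ih, geom_sum_succ]
    ring

def lift1EquivW {n : ℕ} (H : Subgroup (A n)) : lift1 H ≃ W H where
  toFun x := (fun i => ⟨x.1.1 i, x.2 i⟩, x.1.2)
  invFun y := ⟨((fun i => (y.1 i : A n), y.2) : W (A n)), fun i => (y.1 i).2⟩
  left_inv _ := rfl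
  right_inv _ := rfl

theorem card_lift1 {n : ℕ} (H : Subgroup (A n)) : Nat.card (lift1 H) = Nat.card H ^ 3 * 6 := by
  rw [Nat.card_congr (lift1EquivW H), card_W]

def rootSwap (n : ℕ) : A (n + 1) := ((fun _ => 1, swap 0 1) : W (A n))

theorem rootSwap_mem_lift1 {n : ℕ} (H : Subgroup (A n)) : rootSwap n ∈ lift1 H :=
  fun _ => H.one_mem

theorem res_rootSwap (n : ℕ) : res (n + 1) (rootSwap (n + 1)) = rootSwap n :=
  Prod.ext (funext fun _ => map_one (res n)) rfl

theorem resTo2_rootSwap : ∀ n, resTo2 n (rootSwap (n + 1)) = rootSwap 1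
  | 0 => rfl
  | n + 1 => (congrArg (resTo2 n) (res_rootSwap (n + 1))).trans (resTo2_rootSwap n)

theorem sgn2_rootSwap (n : ℕ) : sgn2 n (rootSwap (n + 1)) = -1 := by
  change Perm.sign (toPerm 2 (resTo2 n (rootSwap (n + 1)))) = -1
  rw [resTo2_rootSwap]
  decide

theorem card_E_add_two (n : ℕ) : Nat.card (E (n + 2)) = 3 * Nat.card (E (n + 1)) ^ 3 := by
  have := Subgroup.card_inf_ker_mul_two (rootSwap_mem_lift1 (E (n + 1))) (sgn2_rootSwap n)
  rw [card_lift1] at this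
  change Nat.card ↥(lift1 (E (n + 1)) ⊓ (sgn2 n).ker) = _
  omega

theorem card_E_add_one (n : ℕ) :
    Nat.card (E (n + 1)) = 2 ^ 3 ^ n * 3 ^ ∑ i ∈ range (n + 1), 3 ^ i := by
  induction n with
  | zero => exact (Subgroup.card_top).trans (card_A 1)
  | succ n ih =>
    rw [card_E_add_two, ih, geom_sum_succ (n := n + 1)]
    ring

theorem tendsto_pow_div_geom_sum {q : ℝ} (hq : 1 < q) :
    Tendsto (fun n : ℕ => q ^ n / ∑ i ∈ range (n + 1), q ^ i) atTop (𝓝 ((q - 1) / q)) := by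
  have hratio : ∀ n : ℕ, q ^ n / ∑ i ∈ range (n + 1), q ^ i = (q - 1) / (q - q⁻¹ ^ n) := by
    intro n
    have hden : q - q⁻¹ ^ n ≠ 0 := by
      have : q⁻¹ ^ n ≤ 1 := pow_le_one₀ (by positivity) (inv_le_one_of_one_le₀ hq.le)
      linarith
    rw [geom_sum_eq hq.ne', inv_pow, pow_succ]
    field_simp
  simp_rw [hratio]
  have hpow : Tendsto (fun n : ℕ => q⁻¹ ^ n) atTop (𝓝 0) :=
    tendsto_pow_atTop_nhds_zero_of_lt_one (by positivity) (inv_lt_one_of_one_lt₀ hq)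
  have hlim := (tendsto_const_nhds (x := q - 1)).div ((tendsto_const_nhds (x := q)).sub hpow)
    (by rw [sub_zero]; positivity)
  rwa [sub_zero] at hlim

theorem log_card_E_div_log_card_A (n : ℕ) :
    log (Nat.card (E (n + 1))) / log (Nat.card (A (n + 1)))
      = 3 ^ n / (∑ i ∈ range (n + 1), (3 : ℝ) ^ i) * (log 2 / log 6) + log 3 / log 6 := by
  rw [card_E_add_one, card_A]
  push_cast
  rw [log_mul (by positivity) (by positivity), log_pow, log_pow, log_pow]
  field_simp
  push_cast
  ring

/-- The Hausdorff dimension of `E_∞` in `Aut(T_∞)`: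
`lim_{n→∞} log|E_n| / log|Aut(T_n)| = 1 - (1/3)·(log 2 / log 6)`. -/
theorem hausdorff_dim_E :
    Filter.Tendsto
      (fun n : ℕ => Real.log (Nat.card (E n)) / Real.log (Nat.card (A n)))
      Filter.atTop (nhds (1 - (1 / 3) * (Real.log 2 / Real.log 6))) := by
  rw [← tendsto_add_atTop_iff_nat 1]
  simp_rw [log_card_E_div_log_card_A]
  convert ((tendsto_pow_div_geom_sum (by norm_num : (1 : ℝ) < 3)).mul_const
    (log 2 / log 6)).add_const (log 3 / log 6) using 2
  have hlog6 : log 6 = log 2 + log 3 := by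
    rw [show (6 : ℝ) = 2 * 3 by norm_num, log_mul (by norm_num) (by norm_num)]
  field_simp
  linarith
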